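/- Let β ∈ (F⊗F)[x₁,x₂] be a polynomial all of whose coefficients are weak Frobenius elements of F⊗F. Then: (i) for every f ∈ F⊗F (viewed as a constant polynomial), β·f = σ(f)·β; (ii) for every a ∈ (F⊗F)[x₁,x₂], the element β·a − σ(a)·β is divisible by x₁ − x₂ in (F⊗F)[x₁,x₂]. Consequently, since x₁ − x₂ is not a zero divisor in (F⊗F)[x₁,x₂], there is a unique 𝕜-linear map ∂^β : (F⊗F)[x₁,x₂] → (F⊗F)[x₁,x₂] satisfying (x₁ − x₂)·∂^β(a) = β·a − σ(a)·β for all a. -/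

import Mathlib

/-!
Existence and uniqueness of the β-twisted Demazure operator `∂^β` on
`(F⊗F)[x₁,x₂]`, for `β` with weak Frobenius coefficients.  We model the
(noncommutative) polynomial ring `(F⊗F)[x₁,x₂]` as `(F ⊗[k] F) ⊗[k] k[x₁,x₂]`.
-/

open scoped TensorProduct
open MvPolynomial

variable (k F : Type*)

/-- Weak Frobenius elements of `F ⊗ F`: `(a⊗b)·Δ = Δ·(b⊗a)` for all `a, b ∈ F`. -/
def IsWeakFrobenius [CommSemiring k] [Ring F] [Algebra k F] (Δ : F ⊗[k] F) : Prop :=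
  ∀ a b : F, (a ⊗ₜ[k] b) * Δ = Δ * (b ⊗ₜ[k] a)

/-- The polynomial ring `(F⊗F)[x₁,x₂]`, modelled as `(F⊗F) ⊗ 𝕜[x₁,x₂]`. -/
abbrev PolyFF (k F : Type*) [CommSemiring k] [Ring F] [Algebra k F] :=
  (F ⊗[k] F) ⊗[k] MvPolynomial (Fin 2) k

/-- The automorphism `σ` of `(F⊗F)[x₁,x₂]` flipping the two tensor factors
and interchanging `x₁` and `x₂`. -/
noncomputable def sigmaP [CommSemiring k] [Ring F] [Algebra k F] :
    PolyFF k F ≃ₐ[k] PolyFF k F :=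
  Algebra.TensorProduct.congr (Algebra.TensorProduct.comm k F F)
    (MvPolynomial.renameEquiv k (Equiv.swap (0 : Fin 2) 1))

/-- The element `x₁ - x₂` of `(F⊗F)[x₁,x₂]`. -/
noncomputable def xdiff [CommRing k] [Ring F] [Algebra k F] : PolyFF k F :=
  (1 : F ⊗[k] F) ⊗ₜ[k] ((X (0 : Fin 2) : MvPolynomial (Fin 2) k) - (X (1 : Fin 2) : MvPolynomial (Fin 2) k))

/-!
The multiplications `β · _` and `σ(_) · β` agree on `F ⊗ F` by the weak Frobenius property of the
coefficients of `β`, and `σ` fixes every polynomial modulo `x₁ - x₂`; as `x₁ - x₂` is central in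
`(F⊗F)[x₁,x₂]`, the two sides then agree modulo `x₁ - x₂` everywhere. Since `x₁ - x₂` is a non-zero
divisor (tensoring over a field is exact), dividing by it defines `∂^β` uniquely, and linearly.
-/

theorem IsWeakFrobenius.mul_eq_comm_mul {k F : Type*} [CommSemiring k] [Ring F] [Algebra k F]
    {Δ : F ⊗[k] F} (h : IsWeakFrobenius k F Δ) (f : F ⊗[k] F) :
    Δ * f = Algebra.TensorProduct.comm k F F f * Δ := by
  induction f using TensorProduct.induction_on with
  | zero => simp
  | tmul a b => exact (h b a).symm
  | add x y hx hy => rw [mul_add, hx, hy, map_add, add_mul]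

theorem MvPolynomial.X_sub_X_dvd_sub_rename_swap {R σ : Type*} [CommRing R] [DecidableEq σ]
    (i j : σ) (p : MvPolynomial σ R) : X i - X j ∣ p - rename (Equiv.swap i j) p := by
  let π := Ideal.Quotient.mkₐ R (Ideal.span {(X i - X j : MvPolynomial σ R)})
  have hij : π (X i) = π (X j) := by
    rw [← sub_eq_zero, ← map_sub]
    exact Ideal.Quotient.eq_zero_iff_mem.mpr (Ideal.mem_span_singleton_self _)
  have hπ : π.comp (rename (Equiv.swap i j)) = π := by
    ext n
    simp only [AlgHom.comp_apply, rename_X]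
    rcases eq_or_ne n i with rfl | hi
    · simp [hij]
    rcases eq_or_ne n j with rfl | hj
    · simp [hij]
    · rw [Equiv.swap_apply_of_ne_of_ne hi hj]
  rw [← Ideal.mem_span_singleton, ← Ideal.Quotient.eq, ← Ideal.Quotient.mkₐ_eq_mk R]
  exact (congrArg (· p) hπ).symm

namespace Algebra.TensorProduct

variable {k A R : Type*} [CommRing k] [Ring A] [Algebra k A] [CommRing R] [Algebra k R]

theorem commute_one_tmul (r : R) (x : A ⊗[k] R) : Commute ((1 : A) ⊗ₜ[k] r) x := by
  induction x using TensorProduct.induction_on with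
  | zero => exact Commute.zero_right _
  | tmul a s => simp [Commute, SemiconjBy, mul_comm r]
  | add x y hx hy => exact hx.add_right hy

theorem isLeftRegular_one_tmul [Module.Flat k A] {r : R} (hr : IsLeftRegular r) :
    IsLeftRegular ((1 : A) ⊗ₜ[k] r) := by
  have h := Module.Flat.lTensor_preserves_injective_linearMap (M := A) (LinearMap.mulLeft k r) hr
  rwa [LinearMap.lTensor, ← LinearMap.mulLeft_one k A, ← LinearMap.mulLeft_tmul] at h

theorem one_tmul_dvd_mul_sub_map_mul (τ : A →ₐ[k] A) (ρ : R →ₐ[k] R) {β : A ⊗[k] R}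
    (hβ : ∀ a : A, β * (a ⊗ₜ 1) = (τ a ⊗ₜ 1) * β) {d : R} (hd : ∀ r, d ∣ r - ρ r)
    (x : A ⊗[k] R) :
    (1 : A) ⊗ₜ[k] d ∣ β * x - map τ ρ x * β := by
  induction x using TensorProduct.induction_on with
  | zero => simp
  | add x y hx hy =>
    rw [map_add, mul_add, add_mul, add_sub_add_comm]
    exact dvd_add hx hy
  | tmul a r =>
    obtain ⟨q, hq⟩ := hd r
    have split (a : A) (r : R) : a ⊗ₜ[k] r = (a ⊗ₜ 1) * (1 ⊗ₜ r) := by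
      rw [tmul_mul_tmul, mul_one, one_mul]
    refine ⟨(τ a ⊗ₜ 1) * (1 ⊗ₜ q) * β, ?_⟩
    calc β * (a ⊗ₜ r) - map τ ρ (a ⊗ₜ r) * β
        = (τ a ⊗ₜ 1) * (1 ⊗ₜ r) * β - (τ a ⊗ₜ 1) * (1 ⊗ₜ ρ r) * β := by
          rw [map_tmul, split a, split (τ a), ← mul_assoc, hβ, mul_assoc _ β,
            ← (commute_one_tmul r β).eq, ← mul_assoc]
      _ = (τ a ⊗ₜ 1) * ((1 ⊗ₜ d) * (1 ⊗ₜ q)) * β := by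
          rw [← sub_mul, ← mul_sub, ← TensorProduct.tmul_sub, hq,
            tmul_mul_tmul (1 : A) 1 d q, one_mul]
      _ = (1 ⊗ₜ d) * ((τ a ⊗ₜ 1) * (1 ⊗ₜ q) * β) := by
          rw [← mul_assoc (τ a ⊗ₜ 1), ← (commute_one_tmul d (τ a ⊗ₜ 1)).eq]
          simp only [mul_assoc]

end Algebra.TensorProduct

theorem existsUnique_linearMap_mul_eq {k M R : Type*} [CommSemiring k] [AddCommMonoid M]
    [Module k M] [Semiring R] [Algebra k R] {d : R} (hd : IsLeftRegular d) (L : M →ₗ[k] R)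
    (hL : ∀ m, d ∣ L m) : ∃! D : M →ₗ[k] R, ∀ m, d * D m = L m := by
  have hrange : ∀ m, L m ∈ LinearMap.range (LinearMap.mulLeft k d) := fun m => by
    obtain ⟨u, hu⟩ := hL m
    exact ⟨u, hu.symm⟩
  let e := LinearEquiv.ofInjective (LinearMap.mulLeft k d) hd
  let D₀ := e.symm.toLinearMap ∘ₗ L.codRestrict _ hrange
  have hD₀ : ∀ m, d * D₀ m = L m := fun m => congrArg Subtype.val (e.apply_symm_apply _)
  refine ⟨D₀, hD₀, fun D hD => LinearMap.ext fun m => hd ?_⟩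
  exact (hD m).trans (hD₀ m).symm

theorem stmt9 [Field k] [Ring F] [Algebra k F]
    (β : PolyFF k F)
    -- `β` is a polynomial all of whose coefficients are weak Frobenius
    (s : Finset (Fin 2 →₀ ℕ)) (cf : (Fin 2 →₀ ℕ) → F ⊗[k] F)
    (hwf : ∀ mo, IsWeakFrobenius k F (cf mo))
    (hβ : β = ∑ mo ∈ s, (cf mo) ⊗ₜ[k] (MvPolynomial.monomial mo (1 : k))) :
    -- (i) for every `f ∈ F⊗F` (as a constant polynomial), `β·f = σ(f)·β`
    (∀ f : F ⊗[k] F,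
      β * (f ⊗ₜ[k] (1 : MvPolynomial (Fin 2) k)) =
        (((Algebra.TensorProduct.comm k F F) f) ⊗ₜ[k] (1 : MvPolynomial (Fin 2) k)) * β) ∧
    -- (ii) `β·a − σ(a)·β` is divisible by `x₁ − x₂` for every `a`
    (∀ a : PolyFF k F, xdiff k F ∣ (β * a - (sigmaP k F) a * β)) ∧
    -- hence there is a unique 𝕜-linear map `∂^β` with
    -- `(x₁ − x₂)·∂^β(a) = β·a − σ(a)·β` for all `a`
    (∃! D : PolyFF k F →ₗ[k] PolyFF k F,
      ∀ a : PolyFF k F, xdiff k F * D a = β * a - (sigmaP k F) a * β) := by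
  have hi : ∀ f : F ⊗[k] F, β * (f ⊗ₜ[k] (1 : MvPolynomial (Fin 2) k)) =
      (Algebra.TensorProduct.comm k F F f ⊗ₜ[k] (1 : MvPolynomial (Fin 2) k)) * β := fun f => by
    simp only [hβ, Finset.sum_mul, Finset.mul_sum, Algebra.TensorProduct.tmul_mul_tmul, mul_one,
      one_mul, (hwf _).mul_eq_comm_mul f]
  have hii : ∀ a : PolyFF k F, xdiff k F ∣ β * a - sigmaP k F a * β :=
    Algebra.TensorProduct.one_tmul_dvd_mul_sub_map_mul _ _ hi (X_sub_X_dvd_sub_rename_swap 0 1)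
  have hreg : IsLeftRegular (xdiff k F) := Algebra.TensorProduct.isLeftRegular_one_tmul
    (IsRegular.of_ne_zero (sub_ne_zero.mpr (X_injective.ne zero_ne_one))).left
  exact ⟨hi, hii, existsUnique_linearMap_mul_eq hreg
    (LinearMap.mulLeft k β - LinearMap.mulRight k β ∘ₗ (sigmaP k F).toLinearMap) hii⟩
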